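/- For any integers a and m with m ≠ 0, the sequence of powers a^0, a^1, a^2, … is eventually periodic modulo m, with period dividing φ(m_s) and preperiod at most s, where s and m_s come from the gcd recursion. -/

import Mathlib

def dm (a : ℤ) (m : ℕ) : ℕ → ℕ × ℕ
  | 0 => (Int.gcd a m, m / Int.gcd a m)
  | i + 1 =>
      let p := dm a m i
      let d := Nat.gcd p.1 p.2
      (d, p.2 / d)

/-!
Peeling off `dᵢ = gcd(dᵢ₋₁, mᵢ₋₁)` step by step factors `|m| = m_s · d_s · ∏_{j<s} d_j`.
Every `d_j` divides `a`, so the product divides `a^s`, hence `a^k` for `k ≥ s`; and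
`d_s = 1` forces `gcd(a, m_s) = 1`, so Euler gives `m_s ∣ a^φ(m_s) - 1`. Multiplying the
two divisibilities gives `|m| ∣ a^k (a^φ(m_s) - 1)`.
-/

theorem Int.ModEq.pow_totient {a : ℤ} {n : ℕ} (h : IsCoprime a n) :
    a ^ Nat.totient n ≡ 1 [ZMOD n] := by
  rw [← ZMod.intCast_eq_intCast_iff]
  have euler := congrArg Units.val (ZMod.pow_totient (ZMod.unitOfIsCoprime a h))
  rw [Units.val_pow_eq_pow_val, ZMod.coe_unitOfIsCoprime, Units.val_one] at euler
  exact_mod_cast euler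

theorem Int.pow_add_modEq_pow_of_dvd {a : ℤ} {n M P e k : ℕ} (hn : M * P = n)
    (hM : a ^ e ≡ 1 [ZMOD M]) (hP : (P : ℤ) ∣ a ^ k) : a ^ (k + e) ≡ a ^ k [ZMOD n] := by
  rw [Int.modEq_iff_dvd, ← hn, Nat.cast_mul]
  have h : a ^ k - a ^ (k + e) = (1 - a ^ e) * a ^ k := by ring
  exact h ▸ mul_dvd_mul (Int.modEq_iff_dvd.mp hM) hP

namespace dm

variable (a : ℤ) (n : ℕ)

theorem fst_zero : (dm a n 0).1 = Nat.gcd a.natAbs n := rfl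

theorem fst_succ (i : ℕ) : (dm a n (i + 1)).1 = Nat.gcd (dm a n i).1 (dm a n i).2 := rfl

theorem snd_mul_fst_zero : (dm a n 0).2 * (dm a n 0).1 = n :=
  Nat.div_mul_cancel (Nat.gcd_dvd_right _ _)

theorem snd_mul_fst_succ (i : ℕ) : (dm a n (i + 1)).2 * (dm a n (i + 1)).1 = (dm a n i).2 :=
  Nat.div_mul_cancel (Nat.gcd_dvd_right _ _)

theorem snd_dvd_snd (i : ℕ) : (dm a n (i + 1)).2 ∣ (dm a n i).2 :=
  ⟨_, (snd_mul_fst_succ a n i).symm⟩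

theorem snd_mul_fst_mul_prod (i : ℕ) :
    (dm a n i).2 * (dm a n i).1 * ∏ j ∈ Finset.range i, (dm a n j).1 = n := by
  induction i with
  | zero => simpa using snd_mul_fst_zero a n
  | succ i ih =>
    calc _ = (dm a n (i + 1)).2 * (dm a n (i + 1)).1 * (dm a n i).1 *
          ∏ j ∈ Finset.range i, (dm a n j).1 := by rw [Finset.prod_range_succ]; ring
      _ = n := by rw [snd_mul_fst_succ, ih]

theorem fst_dvd_natAbs (i : ℕ) : (dm a n i).1 ∣ a.natAbs := by
  induction i with
  | zero => rw [fst_zero]; exact Nat.gcd_dvd_left _ _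
  | succ i ih => rw [fst_succ]; exact (Nat.gcd_dvd_left _ _).trans ih

theorem prod_fst_dvd_pow (i : ℕ) : ∏ j ∈ Finset.range i, (dm a n j).1 ∣ a.natAbs ^ i := by
  simpa using Finset.prod_dvd_prod_of_dvd (s := Finset.range i) _ (fun _ ↦ a.natAbs)
    fun j _ ↦ fst_dvd_natAbs a n j

theorem gcd_natAbs_snd_dvd_fst (i : ℕ) : Nat.gcd a.natAbs (dm a n i).2 ∣ (dm a n i).1 := by
  induction i with
  | zero =>
    rw [fst_zero]
    exact Nat.gcd_dvd_gcd_of_dvd_right _ ⟨_, (snd_mul_fst_zero a n).symm⟩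
  | succ i ih =>
    rw [fst_succ]
    have hsnd : Nat.gcd a.natAbs (dm a n (i + 1)).2 ∣ (dm a n i).2 :=
      (Nat.gcd_dvd_right _ _).trans (snd_dvd_snd a n i)
    exact Nat.dvd_gcd ((Nat.dvd_gcd (Nat.gcd_dvd_left _ _) hsnd).trans ih) hsnd

theorem isCoprime_snd_of_fst_eq_one {s : ℕ} (hs : (dm a n s).1 = 1) :
    IsCoprime a (dm a n s).2 := by
  rw [Int.isCoprime_iff_gcd_eq_one]
  exact Nat.dvd_one.mp (hs ▸ gcd_natAbs_snd_dvd_fst a n s)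

end dm

theorem stmt19_general (a m : ℤ) (s : ℕ)
    (hs : (dm a m.natAbs s).1 = 1) :
    ∀ k : ℕ, s ≤ k → a ^ (k + Nat.totient (dm a m.natAbs s).2) ≡ a ^ k [ZMOD m] := by
  intro k hk
  have hfactor := dm.snd_mul_fst_mul_prod a m.natAbs s
  rw [hs, mul_one] at hfactor
  have hprod : ((∏ j ∈ Finset.range s, (dm a m.natAbs j).1 : ℕ) : ℤ) ∣ a ^ k := by
    rw [Int.natCast_dvd, Int.natAbs_pow]
    exact (dm.prod_fst_dvd_pow a m.natAbs s).trans (Nat.pow_dvd_pow _ hk)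
  exact Int.modEq_natAbs.mp <| Int.pow_add_modEq_pow_of_dvd hfactor
    (Int.ModEq.pow_totient (dm.isCoprime_snd_of_fst_eq_one a m.natAbs hs)) hprod

theorem stmt19 (a m : ℤ) (hm : m ≠ 0) (s : ℕ)
    (hs : (dm a m.natAbs s).1 = 1) (hleast : ∀ t < s, (dm a m.natAbs t).1 ≠ 1) :
    ∀ k : ℕ, s ≤ k → a ^ (k + Nat.totient (dm a m.natAbs s).2) ≡ a ^ k [ZMOD m] :=
  stmt19_general a m s hs
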